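/- Let F be an infinite field, n ≥ 2, and consider the differential d^1_{n,1}: H_1((F*)^n, ℤ) → H_1((F*)^{n−1} × GL_1(F), ℤ) given on H_1((F*)^n) ≅ (F*)^n by (a_1, …, a_n) ↦ Σ_{i=1}^n (−1)^{i+1}(a_1, …, â_i, …, a_n, a_i) composed with the identification. Concretely, identifying both sides with (F*)^n, the map sends (a_1,…,a_n) to the alternating sum of the permuted tuples. Then the kernel of d^1_{n,1} is isomorphic to (F*)^{⌊n/2⌋}, generated by elements of the form (a_1, a_1, a_2, a_2, …, a_j, a_j) if n = 2j, and (a_1, 1, a_2, 1, …, a_j, 1, Π_{i=1}^j a_i^{−1}) if n = 2j + 1. -/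

import Mathlib

/-!
Coordinate `k < n - 1` of `d¹ a` is `a_k ^ (σ_n - σ_{k+1}) * a_{k+1} ^ σ_{k+1}`, where
`σ_j = ∑_{i<j} (-1)^(i+1)` is `0` or `-1` according to the parity of `j`, and the last coordinate
is `∏ a_i ^ (-1)^(i+1)`. For even `n` the first `n - 1` coordinates vanish iff `a` is constant on
the pairs `{2t, 2t+1}`, which makes the last one vanish as well; for odd `n` they vanish iff the
odd-indexed entries are trivial, and the last coordinate is then `(∏ a_i)⁻¹`. Either way the kernel
is parametrised by the entries `a_0, a_2, …` of even index below `n - 1`.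
-/

noncomputable section

variable (F : Type) [Field F]

/-- The map `α_i : (F*)^n → (F*)^n`, `(a_1,…,a_n) ↦ (a_1,…,â_i,…,a_n,a_i)`, moving the
`i`-th coordinate to the last position. -/
def alpha (m : ℕ) (i : Fin (m + 1)) (a : Fin (m + 1) → Fˣ) : Fin (m + 1) → Fˣ :=
  Fin.snoc (a ∘ Fin.succAbove i) (a i)

/-- The differential `d¹_{n,1} : H₁((F*)^n) → H₁((F*)^n)`, the alternating sum
`∑_{i=1}^n (−1)^{i+1} α_i` (written multiplicatively). -/
def dOne (m : ℕ) (a : Fin (m + 1) → Fˣ) : Fin (m + 1) → Fˣ :=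
  ∏ i : Fin (m + 1), (alpha F m i a) ^ ((-1 : ℤ) ^ ((i : ℕ) + 1))

open Finset

theorem Function.injective_and_range_eq_of_leftInverse {α β : Type*} {e : α → β} {r : β → α}
    {K : Set β} (hre : LeftInverse r e) (he : ∀ b, e b ∈ K) (her : ∀ a ∈ K, e (r a) = a) :
    Injective e ∧ Set.range e = K :=
  ⟨hre.injective, Set.Subset.antisymm (Set.range_subset_iff.mpr he)
    fun a ha => ⟨r a, her a ha⟩⟩

theorem prod_zpow_eq_zpow_sum {G ι : Type*} [CommGroup G] (s : Finset ι) (f : ι → ℤ) (x : G) :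
    ∏ i ∈ s, x ^ f i = x ^ ∑ i ∈ s, f i := by
  induction s using Finset.cons_induction with
  | empty => simp
  | cons i s hi ih => rw [prod_cons, sum_cons, ih, zpow_add]

theorem sum_range_neg_one_pow_succ (n : ℕ) :
    ∑ i ∈ range n, (-1 : ℤ) ^ (i + 1) = -((n : ℤ) % 2) := by
  induction n with
  | zero => simp
  | succ n ih =>
    rw [sum_range_succ, ih]
    rcases Nat.even_or_odd n with ⟨j, rfl⟩ | ⟨j, rfl⟩ <;> push_cast <;> ring_nf <;> simp

theorem prod_zpow_neg_one_pow_eq_one_of_pairs {G : Type*} [CommGroup G] {n : ℕ} (hn : Even n)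
    (a : Fin n → G) (ha : ∀ i j : Fin n, (i : ℕ) / 2 = (j : ℕ) / 2 → a i = a j) :
    ∏ i, a i ^ ((-1 : ℤ) ^ ((i : ℕ) + 1)) = 1 := by
  obtain ⟨J, rfl⟩ := hn
  set e : Fin J × Fin 2 ≃ Fin (J + J) := finProdFinEquiv.trans (finCongr (mul_two J))
  have he0 (t : Fin J) : (e (t, 0) : ℕ) = 2 * t := by simp [e]
  have he1 (t : Fin J) : (e (t, 1) : ℕ) = 2 * t + 1 := by simp [e]; omega
  rw [← e.prod_comp, Fintype.prod_prod_type]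
  refine prod_eq_one fun t _ => ?_
  rw [Fin.prod_univ_two, ha (e (t, 0)) (e (t, 1)) (by rw [he0, he1]; omega), he0, he1,
    Odd.neg_one_pow ⟨t, rfl⟩, Even.neg_one_pow ⟨t + 1, by ring⟩, zpow_neg_one, zpow_one,
    inv_mul_cancel]

theorem prod_zpow_neg_one_pow_of_odd_eq_one {G : Type*} [CommGroup G] {n : ℕ} (a : Fin n → G)
    (ha : ∀ k : Fin n, (k : ℕ) % 2 = 1 → a k = 1) :
    ∏ i, a i ^ ((-1 : ℤ) ^ ((i : ℕ) + 1)) = (∏ i, a i)⁻¹ := by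
  refine eq_inv_of_mul_eq_one_left ?_
  rw [← prod_mul_distrib]
  refine prod_eq_one fun i _ => ?_
  rcases Nat.even_or_odd (i : ℕ) with hi | hi
  · rw [hi.add_one.neg_one_pow, zpow_neg_one, inv_mul_cancel]
  · rw [ha i (Nat.odd_iff.mp hi), one_zpow, one_mul]

theorem prod_eq_prod_even_of_odd_eq_one {M : Type*} [CommMonoid M] {n J : ℕ}
    (hJ : (n + 1) / 2 = J) (a : Fin n → M) (ha : ∀ k : Fin n, (k : ℕ) % 2 = 1 → a k = 1) :
    ∏ k, a k = ∏ t : Fin J, a ⟨2 * t, by omega⟩ := by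
  refine (Fintype.prod_of_injective (fun t : Fin J => (⟨2 * t, by omega⟩ : Fin n))
    (fun s t h => Fin.ext (by simpa using h)) _ a (fun k hk => ha k ?_) fun _ => rfl).symm
  by_contra hodd
  exact hk ⟨⟨(k : ℕ) / 2, by omega⟩, Fin.ext (by simp; omega)⟩

theorem exists_injective_monoidHom_range_eq_of_even {G : Type*} [CommGroup G] {n : ℕ}
    (hn : Even n) :
    ∃ e : (Fin (n / 2) → G) →* (Fin n → G), Function.Injective e ∧
      Set.range e = {a | ∀ i j : Fin n, (i : ℕ) / 2 = (j : ℕ) / 2 → a i = a j} := by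
  have hn2 : n % 2 = 0 := Nat.even_iff.mp hn
  let r (a : Fin n → G) (t : Fin (n / 2)) : G := a ⟨2 * t, by omega⟩
  refine ⟨MonoidHom.mk' (fun b k => b ⟨k / 2, by omega⟩) fun _ _ => rfl,
    Function.injective_and_range_eq_of_leftInverse (r := r)
      (fun b => funext fun t => ?_) (fun b i j hij => ?_) (fun a ha => funext fun k => ?_)⟩
  · exact congrArg b (Fin.ext (by simp))
  · exact congrArg b (Fin.ext hij)
  · exact ha _ _ (by simp)

theorem exists_injective_monoidHom_range_eq_of_odd {G : Type*} [CommGroup G] {n : ℕ}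
    (hn : Odd n) :
    ∃ e : (Fin (n / 2) → G) →* (Fin n → G), Function.Injective e ∧
      Set.range e = {a | (∀ k : Fin n, (k : ℕ) % 2 = 1 → a k = 1) ∧ ∏ k, a k = 1} := by
  have hn2 : n % 2 = 1 := Nat.odd_iff.mp hn
  -- `e b = (b₀, 1, b₁, 1, …, b_{n/2-1}, 1, (∏ b)⁻¹)`
  let e (b : Fin (n / 2) → G) (k : Fin n) : G :=
    if hk : (k : ℕ) + 1 < n then (if (k : ℕ) % 2 = 0 then b ⟨k / 2, by omega⟩ else 1)
    else (∏ t, b t)⁻¹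
  have he_mul (b c : Fin (n / 2) → G) : e (b * c) = e b * e c := by
    funext k
    simp only [e, Pi.mul_apply, prod_mul_distrib, mul_inv]
    split_ifs
    exacts [rfl, (mul_one 1).symm, rfl]
  have he_odd (b : Fin (n / 2) → G) (k : Fin n) (hk : (k : ℕ) % 2 = 1) : e b k = 1 := by
    simp only [e]
    rw [dif_pos (by omega), if_neg (by omega)]
  have he_even (b : Fin (n / 2) → G) (t : Fin (n / 2)) : e b ⟨2 * t, by omega⟩ = b t := by
    simp only [e]
    rw [dif_pos (by omega), if_pos (by simp)]
    exact congrArg b (Fin.ext (by simp))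
  have hprod (a : Fin n → G) (ha : ∀ k : Fin n, (k : ℕ) % 2 = 1 → a k = 1) :
      ∏ k, a k = (∏ t : Fin (n / 2), a ⟨2 * t, by omega⟩) * a ⟨n - 1, by omega⟩ := by
    rw [prod_eq_prod_even_of_odd_eq_one (J := n / 2 + 1) (by omega) a ha, Fin.prod_univ_castSucc]
    congr 1
    exact congrArg a (Fin.ext (by simp; omega))
  let r (a : Fin n → G) (t : Fin (n / 2)) : G := a ⟨2 * t, by omega⟩
  refine ⟨MonoidHom.mk' e he_mul,
    Function.injective_and_range_eq_of_leftInverse (r := r) (fun b => funext (he_even b))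
      (fun b => ⟨he_odd b, ?_⟩) (fun a ⟨ha, ha1⟩ => funext fun k => ?_)⟩
  · rw [MonoidHom.mk'_apply, hprod _ (he_odd b)]
    simp only [he_even, e]
    rw [dif_neg (by omega), mul_inv_cancel]
  · simp only [MonoidHom.mk'_apply, e]
    split_ifs with hk hk2
    · exact congrArg a (Fin.ext (by simp; omega))
    · exact (ha k (by omega)).symm
    · rw [hprod a ha] at ha1
      rw [inv_eq_of_mul_eq_one_right ha1]
      exact congrArg a (Fin.ext (by simp; omega))

section

variable {F}

theorem dOne_apply (m : ℕ) (a : Fin (m + 1) → Fˣ) (k : Fin (m + 1)) :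
    dOne F m a k = ∏ i : Fin (m + 1), alpha F m i a k ^ ((-1 : ℤ) ^ ((i : ℕ) + 1)) := by
  simp [dOne]

theorem dOne_last (m : ℕ) (a : Fin (m + 1) → Fˣ) :
    dOne F m a (Fin.last m) = ∏ i : Fin (m + 1), a i ^ ((-1 : ℤ) ^ ((i : ℕ) + 1)) := by
  simp [dOne_apply, alpha]

theorem dOne_castSucc (m : ℕ) (a : Fin (m + 1) → Fˣ) (k : Fin m) :
    dOne F m a k.castSucc =
      a k.castSucc ^ (((k : ℤ) + 1) % 2 - ((m : ℤ) + 1) % 2) *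
        a k.succ ^ (-(((k : ℤ) + 1) % 2)) := by
  have hcoord (i : Fin (m + 1)) : alpha F m i a k.castSucc ^ ((-1 : ℤ) ^ ((i : ℕ) + 1)) =
      if (k : ℕ) < i then a k.castSucc ^ ((-1 : ℤ) ^ ((i : ℕ) + 1))
      else a k.succ ^ ((-1 : ℤ) ^ ((i : ℕ) + 1)) := by
    simp only [alpha, Fin.snoc_castSucc, Function.comp_apply, Fin.succAbove, Fin.lt_def,
      Fin.val_castSucc]
    split_ifs <;> rfl
  rw [dOne_apply, Fintype.prod_congr _ _ hcoord, Fin.prod_univ_eq_prod_range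
    (fun i ↦ if (k : ℕ) < i then a k.castSucc ^ ((-1 : ℤ) ^ (i + 1))
      else a k.succ ^ ((-1 : ℤ) ^ (i + 1))) (m + 1),
    show m + 1 = (k + 1) + (m - k) by omega, prod_range_add,
    prod_ite_of_false (fun i hi => by simpa [Nat.lt_succ_iff] using hi),
    prod_ite_of_true (fun i _ => by omega), prod_zpow_eq_zpow_sum, prod_zpow_eq_zpow_sum,
    mul_comm]
  have htotal := sum_range_neg_one_pow_succ (m + 1)
  rw [show m + 1 = (k + 1) + (m - k) by omega, sum_range_add, sum_range_neg_one_pow_succ] at htotal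
  rw [sum_range_neg_one_pow_succ]
  congr 2
  push_cast at htotal
  omega

theorem dOne_castSucc_of_even {m : ℕ} (he : Even (m + 1)) (a : Fin (m + 1) → Fˣ) (k : Fin m) :
    dOne F m a k.castSucc = if (k : ℕ) % 2 = 0 then a k.castSucc / a k.succ else 1 := by
  have hm : ((m : ℤ) + 1) % 2 = 0 := by obtain ⟨J, hJ⟩ := he; omega
  rw [dOne_castSucc]
  split_ifs with hk
  · rw [show ((k : ℤ) + 1) % 2 - ((m : ℤ) + 1) % 2 = 1 by omega,
      show -(((k : ℤ) + 1) % 2) = -1 by omega, zpow_one, zpow_neg_one, div_eq_mul_inv]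
  · rw [show ((k : ℤ) + 1) % 2 - ((m : ℤ) + 1) % 2 = 0 by omega,
      show -(((k : ℤ) + 1) % 2) = 0 by omega, zpow_zero, zpow_zero, mul_one]

theorem dOne_castSucc_of_odd {m : ℕ} (ho : Odd (m + 1)) (a : Fin (m + 1) → Fˣ) (k : Fin m) :
    dOne F m a k.castSucc = if (k : ℕ) % 2 = 0 then (a k.succ)⁻¹ else (a k.castSucc)⁻¹ := by
  have hm : ((m : ℤ) + 1) % 2 = 1 := by obtain ⟨J, hJ⟩ := ho; omega
  rw [dOne_castSucc]
  split_ifs with hk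
  · rw [show ((k : ℤ) + 1) % 2 - ((m : ℤ) + 1) % 2 = 0 by omega,
      show -(((k : ℤ) + 1) % 2) = -1 by omega, zpow_zero, zpow_neg_one, one_mul]
  · rw [show ((k : ℤ) + 1) % 2 - ((m : ℤ) + 1) % 2 = -1 by omega,
      show -(((k : ℤ) + 1) % 2) = 0 by omega, zpow_zero, zpow_neg_one, mul_one]

theorem forall_div_two_eq_imp_eq_iff {α : Type*} {m : ℕ} (a : Fin (m + 1) → α) :
    (∀ i j : Fin (m + 1), (i : ℕ) / 2 = (j : ℕ) / 2 → a i = a j) ↔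
      ∀ k : Fin m, (k : ℕ) % 2 = 0 → a k.castSucc = a k.succ := by
  refine ⟨fun h k hk => h _ _ (by simp; omega), fun h i j hij => ?_⟩
  wlog hlt : (i : ℕ) < j generalizing i j
  · rcases (not_lt.mp hlt).lt_or_eq with hgt | heq
    · exact (this j i hij.symm hgt).symm
    · exact congrArg a (Fin.ext heq.symm)
  convert h ⟨i, by omega⟩ (by simp; omega) using 2
  · rfl
  · ext; simp; omega

theorem dOne_eq_one_iff_of_even {m : ℕ} (he : Even (m + 1)) (a : Fin (m + 1) → Fˣ) :
    dOne F m a = 1 ↔ ∀ i j : Fin (m + 1), (i : ℕ) / 2 = (j : ℕ) / 2 → a i = a j := by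
  rw [funext_iff, Fin.forall_fin_succ', forall_div_two_eq_imp_eq_iff]
  simp only [Pi.one_apply, dOne_castSucc_of_even he]
  refine ⟨fun ⟨h, _⟩ k hk => by simpa [hk, div_eq_one] using h k, fun h => ⟨fun k => ?_, ?_⟩⟩
  · split_ifs with hk
    exacts [div_eq_one.mpr (h k hk), rfl]
  · rw [dOne_last]
    exact prod_zpow_neg_one_pow_eq_one_of_pairs he a ((forall_div_two_eq_imp_eq_iff a).mpr h)

theorem dOne_eq_one_iff_of_odd {m : ℕ} (ho : Odd (m + 1)) (a : Fin (m + 1) → Fˣ) :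
    dOne F m a = 1 ↔ (∀ k : Fin (m + 1), (k : ℕ) % 2 = 1 → a k = 1) ∧ ∏ k, a k = 1 := by
  have hm : m % 2 = 0 := by obtain ⟨J, hJ⟩ := ho; omega
  rw [funext_iff, Fin.forall_fin_succ']
  simp only [Pi.one_apply, dOne_castSucc_of_odd ho, dOne_last]
  suffices hodd : (∀ k : Fin m,
      (if (k : ℕ) % 2 = 0 then (a k.succ)⁻¹ else (a k.castSucc)⁻¹) = 1) ↔
      ∀ k : Fin (m + 1), (k : ℕ) % 2 = 1 → a k = 1 by
    refine ⟨fun ⟨hk, hlast⟩ => ?_, fun ⟨h, hprod⟩ => ⟨hodd.mpr h, ?_⟩⟩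
    · have h := hodd.mp hk
      exact ⟨h, by rwa [prod_zpow_neg_one_pow_of_odd_eq_one a h, inv_eq_one] at hlast⟩
    · rw [prod_zpow_neg_one_pow_of_odd_eq_one a h, hprod, inv_one]
  refine ⟨fun h k hk => ?_, fun h k => ?_⟩
  · have := h ⟨k, by omega⟩
    rwa [if_neg (by simp; omega), inv_eq_one] at this
  · split_ifs with hk <;> rw [h _ (by simp; omega), inv_one]

end

theorem stmt_11 (m : ℕ) :
    (Even (m + 1) → ∀ a : Fin (m + 1) → Fˣ,
      dOne F m a = 1 ↔
        ∀ i j : Fin (m + 1), (i : ℕ) / 2 = (j : ℕ) / 2 → a i = a j) ∧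
    (Odd (m + 1) → ∀ a : Fin (m + 1) → Fˣ,
      dOne F m a = 1 ↔
        ((∀ k : Fin (m + 1), (k : ℕ) % 2 = 1 → a k = 1) ∧ ∏ k, a k = 1)) ∧
    ∃ e : (Fin ((m + 1) / 2) → Fˣ) →* (Fin (m + 1) → Fˣ),
      Function.Injective e ∧ Set.range e = {a | dOne F m a = 1} := by
  refine ⟨dOne_eq_one_iff_of_even, dOne_eq_one_iff_of_odd, ?_⟩
  rcases Nat.even_or_odd (m + 1) with h | h
  · simpa only [dOne_eq_one_iff_of_even h] using
      exists_injective_monoidHom_range_eq_of_even (G := Fˣ) h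
  · simpa only [dOne_eq_one_iff_of_odd h] using
      exists_injective_monoidHom_range_eq_of_odd (G := Fˣ) h

end
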